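/- Let G be a connected cubic simple graph with n vertices and m = 3n/2 edges, m even. Then the number of perfect matchings of the vertex-edge graph M(G) equals the number of perfect matchings of the line graph L(G) multiplied by 3^(n/4), i.e., p(M(G)) = p(L(G)) · 3^(n/4). -/

import Mathlib

/-!
Record a perfect matching by its partner involution. In a matching of `L(G)` an edge is paired
with an edge through a common endpoint, its head; in a matching of `M(G)` an edge is paired
with one of its endpoints or with an edge, and that endpoint or common endpoint is its head.
As `G` is cubic, a matching of `L(G)` is determined by its heads, and the head maps that occur
are exactly the orientations with all in-degrees in `{0, 2}`. A matching of `M(G)` is determined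
by its heads, an orientation with in-degrees in `{1, 3}`, together with the in-edge matched to
each vertex. Reversing every edge exchanges the two kinds of orientation, and an orientation with
in-degrees in `{1, 3}` has exactly `n / 4` vertices of in-degree `3`, since `2 |E| = 3 n`.
-/

variable {V : Type*}

/-- The vertex-edge graph (middle graph) of `G`: vertices are `V(G) ⊕ E(G)`;
two `e`-vertices are adjacent iff the corresponding edges of `G` are distinct and share
an endpoint; a `v`-vertex and an `e`-vertex are adjacent iff the vertex is an endpoint of
the edge; no two `v`-vertices are adjacent. -/
def middleGraph (G : SimpleGraph V) : SimpleGraph (V ⊕ G.edgeSet) where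
  Adj a b :=
    match a, b with
    | Sum.inl _, Sum.inl _ => False
    | Sum.inl u, Sum.inr e => u ∈ (e : Sym2 V)
    | Sum.inr e, Sum.inl u => u ∈ (e : Sym2 V)
    | Sum.inr e, Sum.inr f => e ≠ f ∧ ∃ v, v ∈ (e : Sym2 V) ∧ v ∈ (f : Sym2 V)
  symm := ⟨by
    rintro (u | e) (v | f) h
    · exact h.elim
    · exact h
    · exact h
    · exact ⟨h.1.symm, h.2.imp fun v hv => ⟨hv.2, hv.1⟩⟩⟩
  loopless := ⟨by
    rintro (u | e) h
    · exact h
    · exact h.1 rfl⟩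

/-- The line graph of `G`, with vertex set the edge set of `G`; two edges are adjacent
iff they are distinct and share an endpoint. -/
def lineGraph (G : SimpleGraph V) : SimpleGraph G.edgeSet where
  Adj e f := e ≠ f ∧ ∃ v, v ∈ (e : Sym2 V) ∧ v ∈ (f : Sym2 V)
  symm := ⟨by intro e f h; exact ⟨h.1.symm, h.2.imp fun v hv => ⟨hv.2, hv.1⟩⟩⟩
  loopless := ⟨by intro e h; exact h.1 rfl⟩

/-- `P` is a perfect matching (dimer covering) of `H`, viewed as a set of edges:
all members are edges of `H`, distinct members share no vertex, and every vertex of `H`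
lies in some member. -/
def IsPerfMatchSet {W : Type*} (H : SimpleGraph W) (P : Set (Sym2 W)) : Prop :=
  P ⊆ H.edgeSet ∧
  (∀ p ∈ P, ∀ q ∈ P, p ≠ q → ∀ a, a ∈ p → a ∉ q) ∧
  (∀ w : W, ∃ p ∈ P, w ∈ p)

/-- The number of perfect matchings (dimer coverings) of `H`. -/
noncomputable def pmCount {W : Type*} (H : SimpleGraph W) : ℕ :=
  {P : Set (Sym2 W) | IsPerfMatchSet H P}.ncard

open Function

section MatchingInvolution

variable {W : Type*} {H : SimpleGraph W} {P : Set (Sym2 W)}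

def MatchingInvolution (H : SimpleGraph W) : Type _ :=
  {π : W → W // Involutive π ∧ ∀ w, H.Adj w (π w)}

namespace IsPerfMatchSet

theorem exists_mk_mem (hP : IsPerfMatchSet H P) (w : W) : ∃ u, s(w, u) ∈ P := by
  obtain ⟨p, hp, hw⟩ := hP.2.2 w
  obtain ⟨u, rfl⟩ := Sym2.mem_iff_exists.1 hw
  exact ⟨u, hp⟩

theorem eq_of_mk_mem (hP : IsPerfMatchSet H P) {w u u' : W} (hu : s(w, u) ∈ P)
    (hu' : s(w, u') ∈ P) : u = u' := by
  by_contra hne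
  exact hP.2.1 _ hu _ hu' (hne ∘ Sym2.congr_right.1) w (Sym2.mem_mk_left _ _)
    (Sym2.mem_mk_left _ _)

noncomputable def partner (hP : IsPerfMatchSet H P) (w : W) : W :=
  (hP.exists_mk_mem w).choose

theorem mk_partner_mem (hP : IsPerfMatchSet H P) (w : W) : s(w, hP.partner w) ∈ P :=
  (hP.exists_mk_mem w).choose_spec

theorem partner_eq (hP : IsPerfMatchSet H P) {w u : W} (h : s(w, u) ∈ P) : hP.partner w = u :=
  hP.eq_of_mk_mem (hP.mk_partner_mem w) h

theorem involutive_partner (hP : IsPerfMatchSet H P) : Involutive hP.partner := fun w =>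
  hP.partner_eq (Sym2.eq_swap ▸ hP.mk_partner_mem w)

theorem adj_partner (hP : IsPerfMatchSet H P) (w : W) : H.Adj w (hP.partner w) :=
  hP.1 (hP.mk_partner_mem w)

end IsPerfMatchSet

theorem isPerfMatchSet_range {π : W → W} (hinv : Involutive π) (hadj : ∀ w, H.Adj w (π w)) :
    IsPerfMatchSet H (Set.range fun w => s(w, π w)) := by
  refine ⟨?_, ?_, fun w => ⟨_, ⟨w, rfl⟩, Sym2.mem_mk_left _ _⟩⟩
  · rintro _ ⟨w, rfl⟩
    exact hadj w
  · rintro _ ⟨w, rfl⟩ _ ⟨u, rfl⟩ hne a (ha : a ∈ s(w, π w)) (hau : a ∈ s(u, π u))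
    have hu : u = w ∨ u = π w := by
      rcases Sym2.mem_iff.1 hau with rfl | rfl
      · exact Sym2.mem_iff.1 ha
      · rcases Sym2.mem_iff.1 ha with h | h
        · exact Or.inr (by rw [← h, hinv])
        · exact Or.inl (hinv.injective h)
    apply hne
    rcases hu with rfl | rfl
    · rfl
    · show s(w, π w) = s(π w, π (π w))
      rw [hinv w, Sym2.eq_swap]

noncomputable def perfMatchSetEquivMatchingInvolution (H : SimpleGraph W) :
    {P // IsPerfMatchSet H P} ≃ MatchingInvolution H where
  toFun P := ⟨P.2.partner, P.2.involutive_partner, P.2.adj_partner⟩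
  invFun π := ⟨_, isPerfMatchSet_range π.2.1 π.2.2⟩
  left_inv := by
    rintro ⟨P, hP⟩
    refine Subtype.ext (Set.ext fun p => ?_)
    induction p using Sym2.ind with
    | h a b =>
      refine ⟨?_, fun h => ⟨a, show s(a, hP.partner a) = _ by rw [hP.partner_eq h]⟩⟩
      rintro ⟨w, hw⟩
      exact hw ▸ hP.mk_partner_mem w
  right_inv π :=
    Subtype.ext (funext fun w => (isPerfMatchSet_range π.2.1 π.2.2).partner_eq ⟨w, rfl⟩)

theorem pmCount_eq_card_matchingInvolution (H : SimpleGraph W) :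
    pmCount H = Nat.card (MatchingInvolution H) :=
  (Nat.card_coe_set_eq _).symm.trans (Nat.card_congr (perfMatchSetEquivMatchingInvolution H))

end MatchingInvolution

theorem Sym2.eq_of_mem_of_mem_of_ne {α : Type*} {e f : Sym2 α} {v w : α} (hef : e ≠ f)
    (hve : v ∈ e) (hvf : v ∈ f) (hwe : w ∈ e) (hwf : w ∈ f) : v = w := by
  by_contra hvw
  exact hef (((Sym2.mem_and_mem_iff hvw).1 ⟨hve, hwe⟩).trans
    ((Sym2.mem_and_mem_iff hvw).1 ⟨hvf, hwf⟩).symm)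

theorem Set.even_ncard_of_involution {α : Type*} {s : Set α} {f : α → α} (hmaps : MapsTo f s s)
    (hinv : ∀ a ∈ s, f (f a) = a) (hne : ∀ a ∈ s, f a ≠ a) : Even s.ncard := by
  rcases s.finite_or_infinite with hs | hs
  · rw [Set.ncard_eq_toFinset_card _ hs, ← ZMod.natCast_eq_zero_iff_even, Finset.card_eq_sum_ones,
      Nat.cast_sum]
    refine Finset.sum_involution (fun a _ => f a) (fun _ _ => rfl) (fun a ha _ => ?_)
      (fun a ha => ?_) (fun a ha => ?_) <;> simp only [Set.Finite.mem_toFinset] at ha ⊢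
    exacts [hne a ha, hmaps ha, hinv a ha]
  · rw [hs.ncard]
    exact ⟨0, rfl⟩

section FiberPartner

variable {α β : Type*} {ω : α → β} {S : Set α}

open Classical in
noncomputable def fiberPartner (ω : α → β) (S : Set α) (a : α) : α :=
  if h : ∃ b, {x | x ∈ S ∧ ω x = ω a} \ {a} = {b} then h.choose else a

theorem fiberPartner_eq_iff (hS : ∀ a ∈ S, {x | x ∈ S ∧ ω x = ω a}.ncard = 2) {a b : α}
    (ha : a ∈ S) : fiberPartner ω S a = b ↔ b ∈ S ∧ ω b = ω a ∧ b ≠ a := by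
  have h : ∃ b, {x | x ∈ S ∧ ω x = ω a} \ {a} = {b} := by
    have ha' : a ∈ {x | x ∈ S ∧ ω x = ω a} := ⟨ha, rfl⟩
    rw [← Set.ncard_eq_one, Set.ncard_sdiff_singleton_of_mem ha', hS a ha]
  rw [fiberPartner, dif_pos h, eq_comm, ← Set.mem_singleton_iff, ← h.choose_spec]
  simp only [Set.mem_sdiff, Set.mem_ofPred_eq, Set.mem_singleton_iff, and_assoc]

theorem fiberPartner_spec (hS : ∀ a ∈ S, {x | x ∈ S ∧ ω x = ω a}.ncard = 2) {a : α}
    (ha : a ∈ S) :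
    fiberPartner ω S a ∈ S ∧ ω (fiberPartner ω S a) = ω a ∧ fiberPartner ω S a ≠ a :=
  (fiberPartner_eq_iff hS ha).1 rfl

theorem fiberPartner_fiberPartner (hS : ∀ a ∈ S, {x | x ∈ S ∧ ω x = ω a}.ncard = 2) {a : α}
    (ha : a ∈ S) : fiberPartner ω S (fiberPartner ω S a) = a :=
  let ⟨hmem, hω, hne⟩ := fiberPartner_spec hS ha
  (fiberPartner_eq_iff hS hmem).2 ⟨ha, hω.symm, hne.symm⟩

end FiberPartner

section MeetVertex

variable {W : Type*} {H : SimpleGraph W} {ends : W → Sym2 V}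
  (hends : ∀ ⦃a b⦄, H.Adj a b → ends a ≠ ends b ∧ ∃ v, v ∈ ends a ∧ v ∈ ends b)
  (π : MatchingInvolution H)

noncomputable def meetVertex (w : W) : V :=
  (hends (π.2.2 w)).2.choose

theorem meetVertex_mem (w : W) : meetVertex hends π w ∈ ends w :=
  (hends (π.2.2 w)).2.choose_spec.1

theorem meetVertex_mem_apply (w : W) : meetVertex hends π w ∈ ends (π.1 w) :=
  (hends (π.2.2 w)).2.choose_spec.2

theorem meetVertex_eq {w : W} {v : V} (hv : v ∈ ends w) (hv' : v ∈ ends (π.1 w)) :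
    meetVertex hends π w = v :=
  Sym2.eq_of_mem_of_mem_of_ne (hends (π.2.2 w)).1 (meetVertex_mem hends π w)
    (meetVertex_mem_apply hends π w) hv hv'

theorem meetVertex_apply (w : W) : meetVertex hends π (π.1 w) = meetVertex hends π w :=
  meetVertex_eq hends π (meetVertex_mem_apply hends π w)
    (by rw [π.2.1 w]; exact meetVertex_mem hends π w)

theorem even_ncard_meetVertex_fiber (v : V) : Even {w | meetVertex hends π w = v}.ncard :=
  Set.even_ncard_of_involution (fun w hw => (meetVertex_apply hends π w).trans hw)
    (fun w _ => π.2.1 w) (fun w _ => (π.2.2 w).ne')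

end MeetVertex

section Orientation

variable {G : SimpleGraph V}

noncomputable def indeg (ω : G.edgeSet → V) (v : V) : ℕ :=
  {e | ω e = v}.ncard

-- `ω e` is the endpoint the edge `e` points to.
abbrev OrientationWithIndeg (G : SimpleGraph V) (D : Set ℕ) : Type _ :=
  {ω : G.edgeSet → V // (∀ e : G.edgeSet, ω e ∈ (e : Sym2 V)) ∧ ∀ v, indeg ω v ∈ D}

noncomputable def reverse {ω : G.edgeSet → V} (hω : ∀ e : G.edgeSet, ω e ∈ (e : Sym2 V))
    (e : G.edgeSet) : V :=
  Sym2.Mem.other (hω e)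

theorem reverse_mem {ω : G.edgeSet → V} (hω : ∀ e : G.edgeSet, ω e ∈ (e : Sym2 V))
    (e : G.edgeSet) : reverse hω e ∈ (e : Sym2 V) :=
  Sym2.other_mem (hω e)

theorem reverse_reverse {ω : G.edgeSet → V} (hω : ∀ e : G.edgeSet, ω e ∈ (e : Sym2 V)) :
    reverse (reverse_mem hω) = ω :=
  funext fun e => Sym2.other_invol (hω e) (reverse_mem hω e)

noncomputable def setOfMemEdgeEquivNeighborSet (v : V) :
    {e : G.edgeSet | v ∈ (e : Sym2 V)} ≃ G.neighborSet v := by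
  classical
  exact (Equiv.subtypeSubtypeEquivSubtypeInter (· ∈ G.edgeSet) (v ∈ ·)).trans
    (G.incidenceSetEquivNeighborSet v)

theorem finite_setOf_mem_edge [G.LocallyFinite] (v : V) :
    {e : G.edgeSet | v ∈ (e : Sym2 V)}.Finite :=
  have : Finite {e : G.edgeSet | v ∈ (e : Sym2 V)} :=
    .of_equiv _ (setOfMemEdgeEquivNeighborSet v).symm
  Set.toFinite _

theorem ncard_setOf_mem_edge [G.LocallyFinite] (v : V) :
    {e : G.edgeSet | v ∈ (e : Sym2 V)}.ncard = G.degree v := by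
  rw [← Nat.card_coe_set_eq, Nat.card_congr (setOfMemEdgeEquivNeighborSet v),
    Nat.card_eq_fintype_card, G.card_neighborSet_eq_degree]

theorem finite_setOf_eq [G.LocallyFinite] {ω : G.edgeSet → V}
    (hω : ∀ e : G.edgeSet, ω e ∈ (e : Sym2 V)) (v : V) : {e | ω e = v}.Finite :=
  (finite_setOf_mem_edge v).subset fun e he => he ▸ hω e

theorem indeg_add_indeg_reverse [G.LocallyFinite] {ω : G.edgeSet → V}
    (hω : ∀ e : G.edgeSet, ω e ∈ (e : Sym2 V)) (v : V) :
    indeg ω v + indeg (reverse hω) v = G.degree v := by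
  have hunion :
      {e | ω e = v} ∪ {e | reverse hω e = v} = {e : G.edgeSet | v ∈ (e : Sym2 V)} := by
    ext e
    simp only [Set.mem_union, Set.mem_ofPred_eq]
    conv_rhs => rw [← Sym2.other_spec (hω e), Sym2.mem_iff]
    rw [reverse, @eq_comm _ v, @eq_comm _ v]
  have hdisj : Disjoint {e | ω e = v} {e | reverse hω e = v} :=
    Set.disjoint_left.2 fun e he he' =>
      Sym2.other_ne (G.not_isDiag_of_mem_edgeSet e.2) (hω e) (he'.trans he.symm)
  rw [indeg, indeg, ← Set.ncard_union_eq hdisj (finite_setOf_eq hω v)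
    (finite_setOf_eq (reverse_mem hω) v), hunion, ncard_setOf_mem_edge v]

theorem indeg_le_degree [G.LocallyFinite] {ω : G.edgeSet → V}
    (hω : ∀ e : G.edgeSet, ω e ∈ (e : Sym2 V)) (v : V) : indeg ω v ≤ G.degree v :=
  (indeg_add_indeg_reverse hω v) ▸ Nat.le_add_right _ _

end Orientation

section LineGraph

variable {G : SimpleGraph V}

theorem lineGraph_adj_ends ⦃e f : G.edgeSet⦄ (h : (lineGraph G).Adj e f) :
    (e : Sym2 V) ≠ f ∧ ∃ v, v ∈ (e : Sym2 V) ∧ v ∈ (f : Sym2 V) :=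
  ⟨Subtype.coe_injective.ne h.1, h.2⟩

theorem indeg_meetVertex_lineGraph [G.LocallyFinite] (hcubic : G.IsRegularOfDegree 3)
    (π : MatchingInvolution (lineGraph G)) (v : V) :
    indeg (meetVertex lineGraph_adj_ends π) v ∈ ({0, 2} : Set ℕ) := by
  obtain ⟨k, hk⟩ := even_ncard_meetVertex_fiber lineGraph_adj_ends π v
  have hle := indeg_le_degree (meetVertex_mem lineGraph_adj_ends π) v
  rw [hcubic v, indeg] at hle
  simp only [Set.mem_insert_iff, Set.mem_singleton_iff, indeg]
  omega

theorem ncard_fiber_eq_two [G.LocallyFinite] {ω : G.edgeSet → V}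
    (hω : ∀ e : G.edgeSet, ω e ∈ (e : Sym2 V)) (hD : ∀ v, indeg ω v ∈ ({0, 2} : Set ℕ)) :
    ∀ a ∈ Set.univ, {x | x ∈ Set.univ ∧ ω x = ω a}.ncard = 2 := by
  intro a _
  have hpos := (Set.ncard_pos (finite_setOf_eq hω (ω a))).2 ⟨a, rfl⟩
  have h := hD (ω a)
  simp only [Set.mem_insert_iff, Set.mem_singleton_iff, indeg] at h
  simp only [Set.mem_univ, true_and]
  omega

theorem eq_fiberPartner_meetVertex [G.LocallyFinite] (hcubic : G.IsRegularOfDegree 3)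
    (π : MatchingInvolution (lineGraph G)) :
    π.1 = fiberPartner (meetVertex lineGraph_adj_ends π) Set.univ := by
  have hS := ncard_fiber_eq_two (meetVertex_mem lineGraph_adj_ends π)
    (indeg_meetVertex_lineGraph hcubic π)
  funext e
  exact ((fiberPartner_eq_iff hS (Set.mem_univ e)).2
    ⟨Set.mem_univ _, meetVertex_apply _ π e, (π.2.2 e).ne'⟩).symm

noncomputable def OrientationWithIndeg.lineInvolution [G.LocallyFinite]
    (ω : OrientationWithIndeg G {0, 2}) : MatchingInvolution (lineGraph G) :=
  have hS := ncard_fiber_eq_two ω.2.1 ω.2.2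
  ⟨fiberPartner ω.1 Set.univ, fun e => fiberPartner_fiberPartner hS (Set.mem_univ e), fun e =>
    have ⟨_, hω, hne⟩ := fiberPartner_spec hS (Set.mem_univ e)
    ⟨hne.symm, ω.1 e, ω.2.1 e, hω ▸ ω.2.1 _⟩⟩

theorem meetVertex_lineInvolution [G.LocallyFinite] (ω : OrientationWithIndeg G {0, 2}) :
    meetVertex lineGraph_adj_ends ω.lineInvolution = ω.1 :=
  funext fun e => meetVertex_eq _ _ (ω.2.1 e)
    ((fiberPartner_spec (ncard_fiber_eq_two ω.2.1 ω.2.2) (Set.mem_univ e)).2.1 ▸ ω.2.1 _)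

noncomputable def lineGraphMatchingInvolutionEquiv [G.LocallyFinite]
    (hcubic : G.IsRegularOfDegree 3) :
    MatchingInvolution (lineGraph G) ≃ OrientationWithIndeg G {0, 2} where
  toFun π := ⟨meetVertex lineGraph_adj_ends π, meetVertex_mem _ π,
    indeg_meetVertex_lineGraph hcubic π⟩
  invFun ω := ω.lineInvolution
  left_inv π := Subtype.ext (eq_fiberPartner_meetVertex hcubic π).symm
  right_inv ω := Subtype.ext (meetVertex_lineInvolution ω)

end LineGraph

section MiddleGraph

variable {G : SimpleGraph V}

-- Vertices become diagonals, so that adjacency in the middle graph reads "distinct, with a common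
-- endpoint", exactly as in the line graph.
def middleToSym2 : V ⊕ G.edgeSet → Sym2 V :=
  Sum.elim (fun v => s(v, v)) Subtype.val

theorem middleGraph_adj_ends ⦃a b : V ⊕ G.edgeSet⦄ (h : (middleGraph G).Adj a b) :
    middleToSym2 a ≠ middleToSym2 b ∧ ∃ v, v ∈ middleToSym2 a ∧ v ∈ middleToSym2 b := by
  have hdiag (u : V) (e : G.edgeSet) : s(u, u) ≠ e := fun h' =>
    G.not_isDiag_of_mem_edgeSet e.2 (h' ▸ Sym2.mk_isDiag_iff.2 rfl)
  rcases a with u | e <;> rcases b with w | f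
  · exact h.elim
  · exact ⟨hdiag u f, u, Sym2.mem_mk_left _ _, h⟩
  · exact ⟨(hdiag w e).symm, w, h, Sym2.mem_mk_left _ _⟩
  · exact ⟨Subtype.coe_injective.ne h.1, h.2⟩

variable (π : MatchingInvolution (middleGraph G))

noncomputable abbrev middleHead (e : G.edgeSet) : V :=
  meetVertex middleGraph_adj_ends π (.inr e)

theorem middleHead_mem (e : G.edgeSet) : middleHead π e ∈ (e : Sym2 V) :=
  meetVertex_mem middleGraph_adj_ends π (.inr e)

theorem meetVertex_inl (v : V) : meetVertex middleGraph_adj_ends π (.inl v) = v :=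
  (Sym2.mem_iff.1 (meetVertex_mem middleGraph_adj_ends π (.inl v))).elim id id

theorem exists_apply_inl_eq_inr (v : V) : ∃ e, π.1 (.inl v) = .inr e := by
  have h := π.2.2 (.inl v)
  rcases hπ : π.1 (.inl v) with u | e
  · rw [hπ] at h
    exact h.elim
  · exact ⟨e, rfl⟩

noncomputable def vertexPartner (v : V) : G.edgeSet :=
  (exists_apply_inl_eq_inr π v).choose

theorem apply_inl (v : V) : π.1 (.inl v) = .inr (vertexPartner π v) :=
  (exists_apply_inl_eq_inr π v).choose_spec

theorem apply_inr_vertexPartner (v : V) : π.1 (.inr (vertexPartner π v)) = .inl v := by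
  rw [← apply_inl, π.2.1]

theorem middleHead_vertexPartner (v : V) : middleHead π (vertexPartner π v) = v := by
  rw [middleHead, ← apply_inl, meetVertex_apply, meetVertex_inl]

theorem indeg_middleHead [G.LocallyFinite] (hcubic : G.IsRegularOfDegree 3) (v : V) :
    indeg (middleHead π) v ∈ ({1, 3} : Set ℕ) := by
  have hfiber : {x | meetVertex middleGraph_adj_ends π x = v} =
      insert (.inl v) (Sum.inr '' {e | middleHead π e = v}) := by
    ext (u | e) <;> simp [meetVertex_inl]
  obtain ⟨k, hk⟩ := even_ncard_meetVertex_fiber middleGraph_adj_ends π v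
  rw [hfiber, Set.ncard_insert_of_notMem (by simp)
    ((finite_setOf_eq (middleHead_mem π) v).image _),
    Set.ncard_image_of_injective _ Sum.inr_injective] at hk
  have hle := indeg_le_degree (middleHead_mem π) v
  rw [hcubic v, indeg] at hle
  simp only [Set.mem_insert_iff, Set.mem_singleton_iff, indeg]
  omega

end MiddleGraph

section MiddleGraphBuild

variable {G : SimpleGraph V} {ω : G.edgeSet → V} {σ : V → G.edgeSet}

theorem ncard_fiber_off_section_eq_two [G.LocallyFinite]
    (hω : ∀ e : G.edgeSet, ω e ∈ (e : Sym2 V)) (hD : ∀ v, indeg ω v ∈ ({1, 3} : Set ℕ))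
    (hσ : ∀ v, ω (σ v) = v) :
    ∀ a ∈ {e | e ≠ σ (ω e)}, {x | x ∈ {e | e ≠ σ (ω e)} ∧ ω x = ω a}.ncard = 2 := by
  intro a (ha : a ≠ σ (ω a))
  have hset : {x | x ∈ {e | e ≠ σ (ω e)} ∧ ω x = ω a} = {x | ω x = ω a} \ {σ (ω a)} := by
    ext x
    simp only [Set.mem_ofPred_eq, Set.mem_sdiff, Set.mem_singleton_iff]
    exact ⟨fun ⟨hx, hxa⟩ => ⟨hxa, hxa ▸ hx⟩, fun ⟨hxa, hx⟩ => ⟨hxa ▸ hx, hxa⟩⟩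
  have htwo : 2 ≤ indeg ω (ω a) := by
    rw [← Set.ncard_pair (Ne.symm ha)]
    refine Set.ncard_le_ncard (fun x hx => ?_) (finite_setOf_eq hω _)
    rcases hx with rfl | rfl
    exacts [hσ _, rfl]
  have h := hD (ω a)
  rw [hset, Set.ncard_sdiff_singleton_of_mem (show σ (ω a) ∈ {x | ω x = ω a} from hσ (ω a))]
  simp only [Set.mem_insert_iff, Set.mem_singleton_iff, indeg] at h htwo ⊢
  omega

open Classical in
noncomputable def middlePairing (ω : G.edgeSet → V) (σ : V → G.edgeSet) :
    V ⊕ G.edgeSet → V ⊕ G.edgeSet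
  | .inl v => .inr (σ v)
  | .inr e => if e = σ (ω e) then .inl (ω e) else .inr (fiberPartner ω {e | e ≠ σ (ω e)} e)

theorem middlePairing_inr_of_eq {e : G.edgeSet} (he : e = σ (ω e)) :
    middlePairing ω σ (.inr e) = .inl (ω e) := by
  simp only [middlePairing, if_pos he]

theorem middlePairing_inr_of_ne {e : G.edgeSet} (he : e ≠ σ (ω e)) :
    middlePairing ω σ (.inr e) = .inr (fiberPartner ω {e | e ≠ σ (ω e)} e) := by
  simp only [middlePairing, if_neg he]

theorem involutive_middlePairing [G.LocallyFinite] (hω : ∀ e : G.edgeSet, ω e ∈ (e : Sym2 V))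
    (hD : ∀ v, indeg ω v ∈ ({1, 3} : Set ℕ)) (hσ : ∀ v, ω (σ v) = v) :
    Involutive (middlePairing ω σ) := by
  have hS := ncard_fiber_off_section_eq_two hω hD hσ
  rintro (v | e)
  · show middlePairing ω σ (.inr (σ v)) = .inl v
    rw [middlePairing_inr_of_eq (by rw [hσ v]), hσ v]
  by_cases he : e = σ (ω e)
  · rw [middlePairing_inr_of_eq he]
    exact congrArg _ he.symm
  · have hp := (fiberPartner_spec hS he).1
    rw [middlePairing_inr_of_ne he, middlePairing_inr_of_ne hp, fiberPartner_fiberPartner hS he]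

theorem adj_middlePairing [G.LocallyFinite] (hω : ∀ e : G.edgeSet, ω e ∈ (e : Sym2 V))
    (hD : ∀ v, indeg ω v ∈ ({1, 3} : Set ℕ)) (hσ : ∀ v, ω (σ v) = v) (x : V ⊕ G.edgeSet) :
    (middleGraph G).Adj x (middlePairing ω σ x) := by
  rcases x with v | e
  · show v ∈ (σ v : Sym2 V)
    simpa only [hσ v] using hω (σ v)
  by_cases he : e = σ (ω e)
  · rw [middlePairing_inr_of_eq he]
    exact hω e
  · have ⟨_, hpω, hpe⟩ := fiberPartner_spec (ncard_fiber_off_section_eq_two hω hD hσ) he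
    rw [middlePairing_inr_of_ne he]
    exact ⟨hpe.symm, ω e, hω e, hpω ▸ hω _⟩

noncomputable def middleInvolution [G.LocallyFinite] (hω : ∀ e : G.edgeSet, ω e ∈ (e : Sym2 V))
    (hD : ∀ v, indeg ω v ∈ ({1, 3} : Set ℕ)) (hσ : ∀ v, ω (σ v) = v) :
    MatchingInvolution (middleGraph G) :=
  ⟨middlePairing ω σ, involutive_middlePairing hω hD hσ, adj_middlePairing hω hD hσ⟩

end MiddleGraphBuild

section MiddleGraphEquiv

variable {G : SimpleGraph V} [G.LocallyFinite]

theorem middleHead_middleInvolution {ω : G.edgeSet → V} {σ : V → G.edgeSet}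
    (hω : ∀ e : G.edgeSet, ω e ∈ (e : Sym2 V)) (hD : ∀ v, indeg ω v ∈ ({1, 3} : Set ℕ))
    (hσ : ∀ v, ω (σ v) = v) : middleHead (middleInvolution hω hD hσ) = ω := by
  funext e
  refine meetVertex_eq _ _ (hω e) ?_
  show ω e ∈ middleToSym2 (middlePairing ω σ (.inr e))
  by_cases he : e = σ (ω e)
  · rw [middlePairing_inr_of_eq he]
    exact Sym2.mem_mk_left _ _
  · rw [middlePairing_inr_of_ne he]
    exact (fiberPartner_spec (ncard_fiber_off_section_eq_two hω hD hσ) he).2.1 ▸ hω _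

theorem vertexPartner_middleInvolution {ω : G.edgeSet → V} {σ : V → G.edgeSet}
    (hω : ∀ e : G.edgeSet, ω e ∈ (e : Sym2 V)) (hD : ∀ v, indeg ω v ∈ ({1, 3} : Set ℕ))
    (hσ : ∀ v, ω (σ v) = v) : vertexPartner (middleInvolution hω hD hσ) = σ :=
  funext fun v => Sum.inr_injective (apply_inl (middleInvolution hω hD hσ) v).symm

theorem eq_middlePairing (hcubic : G.IsRegularOfDegree 3) (π : MatchingInvolution (middleGraph G)) :
    π.1 = middlePairing (middleHead π) (vertexPartner π) := by
  have hS := ncard_fiber_off_section_eq_two (middleHead_mem π) (indeg_middleHead π hcubic)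
    (middleHead_vertexPartner π)
  funext x
  rcases x with v | e
  · exact apply_inl π v
  by_cases he : e = vertexPartner π (middleHead π e)
  · rw [middlePairing_inr_of_eq he]
    conv_lhs => rw [he]
    exact apply_inr_vertexPartner π _
  rw [middlePairing_inr_of_ne he]
  rcases hx : π.1 (.inr e) with u | f
  · have : vertexPartner π u = e := Sum.inr_injective <| by rw [← apply_inl, ← hx, π.2.1]
    exact absurd (by rw [← this, middleHead_vertexPartner]) he
  · refine congrArg _ ((fiberPartner_eq_iff hS he).2 ⟨fun hf => ?_, ?_, ?_⟩).symm
    · have h := apply_inr_vertexPartner π (middleHead π f)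
      rw [← hf, ← hx, π.2.1] at h
      exact Sum.inr_ne_inl h
    · have h := meetVertex_apply middleGraph_adj_ends π (.inr e)
      rwa [hx] at h
    · have h := (π.2.2 (.inr e)).ne'
      rw [hx] at h
      exact fun hfe => h (congrArg _ hfe)

noncomputable def middleGraphMatchingInvolutionEquiv (hcubic : G.IsRegularOfDegree 3) :
    MatchingInvolution (middleGraph G) ≃
      Σ ω : OrientationWithIndeg G {1, 3}, {σ : V → G.edgeSet // ∀ v, ω.1 (σ v) = v} where
  toFun π := ⟨⟨middleHead π, middleHead_mem π, indeg_middleHead π hcubic⟩,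
    ⟨vertexPartner π, middleHead_vertexPartner π⟩⟩
  invFun x := middleInvolution x.1.2.1 x.1.2.2 x.2.2
  left_inv π := Subtype.ext (eq_middlePairing hcubic π).symm
  right_inv _ := Sigma.subtype_ext (Subtype.ext (middleHead_middleInvolution _ _ _))
    (vertexPartner_middleInvolution _ _ _)

end MiddleGraphEquiv

section Counting

variable {G : SimpleGraph V}

theorem indeg_reverse [G.LocallyFinite] {d : ℕ} (hreg : G.IsRegularOfDegree d)
    {ω : G.edgeSet → V} (hω : ∀ e : G.edgeSet, ω e ∈ (e : Sym2 V)) (v : V) :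
    indeg (reverse hω) v = d - indeg ω v := by
  have := indeg_add_indeg_reverse hω v
  rw [hreg v] at this
  omega

noncomputable def reverseEquiv [G.LocallyFinite] (hcubic : G.IsRegularOfDegree 3) :
    OrientationWithIndeg G {1, 3} ≃ OrientationWithIndeg G {0, 2} where
  toFun ω := ⟨reverse ω.2.1, reverse_mem ω.2.1, fun v => by
    have := ω.2.2 v
    simp only [Set.mem_insert_iff, Set.mem_singleton_iff, indeg_reverse hcubic] at this ⊢
    omega⟩
  invFun ω := ⟨reverse ω.2.1, reverse_mem ω.2.1, fun v => by
    have := ω.2.2 v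
    simp only [Set.mem_insert_iff, Set.mem_singleton_iff, indeg_reverse hcubic] at this ⊢
    omega⟩
  left_inv ω := Subtype.ext (reverse_reverse ω.2.1)
  right_inv ω := Subtype.ext (reverse_reverse ω.2.1)

theorem sum_indeg [Fintype V] (ω : G.edgeSet → V) : ∑ v, indeg ω v = Nat.card G.edgeSet := by
  rw [← Nat.card_congr (Equiv.sigmaFiberEquiv ω), Nat.card_sigma]
  exact Finset.sum_congr rfl fun v _ => (Nat.card_coe_set_eq _).symm

theorem card_sections [Fintype V] (ω : G.edgeSet → V) :
    Nat.card {σ : V → G.edgeSet // ∀ v, ω (σ v) = v} = ∏ v, indeg ω v := by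
  rw [Nat.card_congr (Equiv.subtypePiEquivPi (p := fun v e => ω e = v)), Nat.card_pi]
  exact Finset.prod_congr rfl fun v _ => Nat.card_coe_set_eq _

-- Each in-degree `d ∈ {1, 3}` is `3 ^ ((d - 1) / 2)`, and these exponents add up to `n / 4`
-- because `2 |E| = 3 n`.
theorem prod_indeg [Fintype V] [G.LocallyFinite] (hcubic : G.IsRegularOfDegree 3)
    (ω : OrientationWithIndeg G {1, 3}) : ∏ v, indeg ω.1 v = 3 ^ (Fintype.card V / 4) := by
  obtain ⟨ω, hω, hD⟩ := ω
  have hedges : 2 * Nat.card G.edgeSet = 3 * Fintype.card V := by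
    have h := Finset.sum_congr rfl fun v (_ : v ∈ Finset.univ) =>
      (indeg_add_indeg_reverse hω v).trans (hcubic v)
    rw [Finset.sum_add_distrib, sum_indeg, sum_indeg, Finset.sum_const, Finset.card_univ,
      smul_eq_mul] at h
    omega
  have hodd (v : V) : indeg ω v = 2 * ((indeg ω v - 1) / 2) + 1 ∧
      indeg ω v = 3 ^ ((indeg ω v - 1) / 2) := by
    have h := hD v
    simp only [Set.mem_insert_iff, Set.mem_singleton_iff] at h
    rcases h with h | h <;> rw [h] <;> norm_num
  have hsum : Nat.card G.edgeSet = 2 * ∑ v, (indeg ω v - 1) / 2 + Fintype.card V := by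
    rw [← sum_indeg ω, Finset.mul_sum, ← Finset.card_univ, Finset.card_eq_sum_ones,
      ← Finset.sum_add_distrib]
    exact Finset.sum_congr rfl fun v _ => (hodd v).1
  calc ∏ v, indeg ω v = ∏ v, 3 ^ ((indeg ω v - 1) / 2) :=
        Finset.prod_congr rfl fun v _ => (hodd v).2
    _ = 3 ^ (Fintype.card V / 4) := by
        rw [Finset.prod_pow_eq_pow_sum]
        congr 1
        omega

theorem card_sigma_sections [Fintype V] [G.LocallyFinite] (hcubic : G.IsRegularOfDegree 3) :
    Nat.card (Σ ω : OrientationWithIndeg G {1, 3}, {σ : V → G.edgeSet // ∀ v, ω.1 (σ v) = v}) =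
      Nat.card (OrientationWithIndeg G {1, 3}) * 3 ^ (Fintype.card V / 4) := by
  have := Fintype.ofFinite (OrientationWithIndeg G {1, 3})
  rw [Nat.card_sigma,
    Finset.sum_congr rfl fun ω _ => (card_sections ω.1).trans (prod_indeg hcubic ω),
    Finset.sum_const, Finset.card_univ, smul_eq_mul, Nat.card_eq_fintype_card]

end Counting

theorem middle_graph_pm_eq_line_graph_pm_mul_general {V : Type*} [Fintype V]
    (G : SimpleGraph V) [DecidableRel G.Adj]
    (hcubic : G.IsRegularOfDegree 3) :
    pmCount (middleGraph G) = pmCount (lineGraph G) * 3 ^ (Fintype.card V / 4) := by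
  rw [pmCount_eq_card_matchingInvolution, pmCount_eq_card_matchingInvolution,
    Nat.card_congr (middleGraphMatchingInvolutionEquiv hcubic), card_sigma_sections hcubic,
    Nat.card_congr (reverseEquiv hcubic), Nat.card_congr (lineGraphMatchingInvolutionEquiv hcubic)]

/-- Let `G` be a connected cubic graph with `n` vertices and an even
number of edges.  Then `p(M(G)) = p(L(G)) · 3^(n/4)`. -/
theorem middle_graph_pm_eq_line_graph_pm_mul {V : Type*} [Fintype V] [DecidableEq V]
    (G : SimpleGraph V) [DecidableRel G.Adj]
    (hconn : G.Connected) (hcubic : G.IsRegularOfDegree 3)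
    (heven : Even G.edgeFinset.card) :
    pmCount (middleGraph G) = pmCount (lineGraph G) * 3 ^ (Fintype.card V / 4) :=
  middle_graph_pm_eq_line_graph_pm_mul_general G hcubic
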